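/- arXiv:2601.06532 — 2 statements merged into one kernel-verified Lean document; each statement's English description precedes it below -/
import Mathlib

section
/- Inner automorphisms are realized by braids: Let G be a group and (g₁,…,g_r) ∈ G^r a tuple with g₁⋯g_r = 1. Then for every element a of the subgroup of G generated by {g₁,…,g_r}, the componentwise conjugated tuple (a g₁ a⁻¹, …, a g_r a⁻¹) is braid-equivalent to (g₁,…,g_r). In particular, if the entries generate G, conjugation by any element of G preserves the braid orbit. -/
/-- The elementary braid move `Q_i`: `w` is obtained from `v` by replacing
`(…, g_i, g_{i+1}, …)` with `(…, g_i g_{i+1} g_i⁻¹, g_i, …)`. -/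
def BraidStep {G : Type*} [Group G] {r : ℕ} (v w : Fin r → G) : Prop :=
  ∃ i : ℕ, ∃ h : i + 1 < r,
    w ⟨i, Nat.lt_of_succ_lt h⟩ =
      v ⟨i, Nat.lt_of_succ_lt h⟩ * v ⟨i + 1, h⟩ * (v ⟨i, Nat.lt_of_succ_lt h⟩)⁻¹ ∧
    w ⟨i + 1, h⟩ = v ⟨i, Nat.lt_of_succ_lt h⟩ ∧
    ∀ j : Fin r, j.val ≠ i → j.val ≠ i + 1 → w j = v j

/-- Two tuples are braid-equivalent if they are related by the equivalence relation
generated by the elementary braid moves and their inverses (the Hurwitz action of `B_r`). -/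
def BraidEquiv {G : Type*} [Group G] {r : ℕ} (v w : Fin r → G) : Prop :=
  Relation.EqvGen BraidStep v w

/-! The elements `a` for which conjugation by `a` preserves the braid class of `g` form a subgroup,
which depends only on that braid class; so it suffices to show that it contains every entry.
Sliding the last entry `y` of `(h, y)` leftwards through all of `h` conjugates it by the product
of `h`, which is `y⁻¹` when the total product is `1`: the rotation `(h, y) ↦ (y, h)` is a braid.
Sliding the first entry of `(y, h)` rightwards conjugates the others by `y` and yields
`(y h y⁻¹, y)`, the conjugate of `(h, y)` by `y`. So the last entry lies in the subgroup, and
rotations bring every entry to the last position. -/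

theorem Relation.EqvGen.map {α β : Type*} {r : α → α → Prop} {s : β → β → Prop} (f : α → β)
    (hf : ∀ a b, r a b → s (f a) (f b)) {a b : α} (h : Relation.EqvGen r a b) :
    Relation.EqvGen s (f a) (f b) :=
  Quot.eqvGen_exact (congrArg (Quot.map f hf) (Quot.eqvGen_sound h))

section

variable {G : Type*} [Group G] {n r : ℕ}

theorem List.prod_ofFn_cons {M : Type*} [Monoid M] (x : M) (h : Fin n → M) :
    (List.ofFn (Fin.cons x h : Fin (n + 1) → M)).prod = x * (List.ofFn h).prod := by
  simp [List.ofFn_succ]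

theorem List.prod_ofFn_snoc {M : Type*} [Monoid M] (h : Fin n → M) (y : M) :
    (List.ofFn (Fin.snoc h y : Fin (n + 1) → M)).prod = (List.ofFn h).prod * y := by
  rw [List.ofFn_succ_last]
  simp

theorem BraidEquiv.refl (v : Fin r → G) : BraidEquiv v v := Relation.EqvGen.refl v

theorem BraidEquiv.symm {v w : Fin r → G} (h : BraidEquiv v w) : BraidEquiv w v :=
  Relation.EqvGen.symm _ _ h

theorem BraidEquiv.trans {u v w : Fin r → G} (h₁ : BraidEquiv u v) (h₂ : BraidEquiv v w) :
    BraidEquiv u w :=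
  Relation.EqvGen.trans _ _ _ h₁ h₂

theorem BraidStep.braidEquiv {v w : Fin r → G} (h : BraidStep v w) : BraidEquiv v w :=
  Relation.EqvGen.rel _ _ h

theorem BraidStep.map {H : Type*} [Group H] (φ : G →* H) {v w : Fin r → G}
    (h : BraidStep v w) : BraidStep (φ ∘ v) (φ ∘ w) := by
  obtain ⟨i, hi, h₁, h₂, h₃⟩ := h
  exact ⟨i, hi, by simp [h₁], by simp [h₂], fun j hj hj' => by simp [h₃ j hj hj']⟩

theorem BraidEquiv.map {H : Type*} [Group H] (φ : G →* H) {v w : Fin r → G}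
    (h : BraidEquiv v w) : BraidEquiv (φ ∘ v) (φ ∘ w) :=
  Relation.EqvGen.map (φ ∘ ·) (fun _ _ => BraidStep.map φ) h

theorem BraidEquiv.conj (a : G) {v w : Fin r → G} (h : BraidEquiv v w) :
    BraidEquiv (fun i => a * v i * a⁻¹) (fun i => a * w i * a⁻¹) :=
  h.map (MulAut.conj a).toMonoidHom

theorem BraidStep.cons (a : G) {v w : Fin n → G} (h : BraidStep v w) :
    BraidStep (Fin.cons a v : Fin (n + 1) → G) (Fin.cons a w) := by
  obtain ⟨i, hi, h₁, h₂, h₃⟩ := h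
  refine ⟨i + 1, by omega, h₁, h₂, Fin.cases (fun _ _ => rfl) fun j hj hj' => ?_⟩
  simpa using h₃ j (by simpa using hj) (by simpa using hj')

theorem BraidEquiv.cons (a : G) {v w : Fin n → G} (h : BraidEquiv v w) :
    BraidEquiv (Fin.cons a v : Fin (n + 1) → G) (Fin.cons a w) :=
  Relation.EqvGen.map (fun u : Fin n → G => (Fin.cons a u : Fin (n + 1) → G))
    (fun _ _ => BraidStep.cons a) h

theorem braidStep_cons_cons (x y : G) (h : Fin n → G) :
    BraidStep (Fin.cons x (Fin.cons y h : Fin (n + 1) → G) : Fin (n + 2) → G)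
      (Fin.cons (x * y * x⁻¹) (Fin.cons x h : Fin (n + 1) → G)) := by
  refine ⟨0, by omega, rfl, rfl, Fin.cases (fun hj => (hj rfl).elim) fun j _ => ?_⟩
  exact Fin.cases (fun hj => (hj rfl).elim) (fun _ _ => rfl) j

theorem braidEquiv_cons_snoc (x : G) (h : Fin n → G) :
    BraidEquiv (Fin.cons x h : Fin (n + 1) → G) (Fin.snoc (fun i => x * h i * x⁻¹) x) := by
  induction n with
  | zero =>
    convert BraidEquiv.refl (Fin.cons x h : Fin 1 → G) using 1
    funext i
    fin_cases i
    rfl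
  | succ n ih =>
    obtain ⟨y, t, rfl⟩ : ∃ y t, h = Fin.cons y t := ⟨h 0, Fin.tail h, (Fin.cons_self_tail h).symm⟩
    have hmove := (ih t).cons (x * y * x⁻¹)
    rw [Fin.cons_snoc_eq_snoc_cons] at hmove
    convert (braidStep_cons_cons x y t).braidEquiv.trans hmove using 2
    funext i
    refine Fin.cases ?_ (fun j => ?_) i <;> simp

theorem braidEquiv_snoc_cons (h : Fin n → G) (y : G) :
    BraidEquiv (Fin.snoc h y : Fin (n + 1) → G)
      (Fin.cons ((List.ofFn h).prod * y * (List.ofFn h).prod⁻¹) h) := by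
  induction n with
  | zero =>
    convert BraidEquiv.refl (Fin.snoc h y : Fin 1 → G) using 1
    funext i
    fin_cases i
    simp [Fin.snoc]
  | succ n ih =>
    obtain ⟨a, t, rfl⟩ : ∃ a t, h = Fin.cons a t := ⟨h 0, Fin.tail h, (Fin.cons_self_tail h).symm⟩
    have hmove := (ih t).cons a
    rw [← Fin.cons_snoc_eq_snoc_cons]
    convert hmove.trans (braidStep_cons_cons a _ t).braidEquiv using 2
    simp [mul_assoc]

theorem braidEquiv_snoc_cons_of_prod_mul_eq_one {h : Fin n → G} {y : G}
    (hprod : (List.ofFn h).prod * y = 1) :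
    BraidEquiv (Fin.snoc h y : Fin (n + 1) → G) (Fin.cons y h) := by
  simpa [eq_inv_of_mul_eq_one_left hprod] using braidEquiv_snoc_cons h y

def conjBraidStabilizer (g : Fin r → G) : Subgroup G where
  carrier := {a | BraidEquiv (fun i => a * g i * a⁻¹) g}
  one_mem' := show BraidEquiv _ g by simpa using BraidEquiv.refl g
  mul_mem' {a b} (ha : BraidEquiv _ g) (hb : BraidEquiv _ g) := show BraidEquiv _ g by
    simpa only [mul_inv_rev, mul_assoc] using (hb.conj a).trans ha
  inv_mem' {a} (ha : BraidEquiv _ g) := show BraidEquiv _ g by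
    simpa only [mul_assoc, inv_mul_cancel_left, mul_inv_cancel, mul_one] using (ha.conj a⁻¹).symm

theorem mem_conjBraidStabilizer {g : Fin r → G} {a : G} :
    a ∈ conjBraidStabilizer g ↔ BraidEquiv (fun i => a * g i * a⁻¹) g := Iff.rfl

theorem BraidEquiv.conjBraidStabilizer_le {v w : Fin r → G} (h : BraidEquiv v w) :
    conjBraidStabilizer v ≤ conjBraidStabilizer w := fun a (ha : BraidEquiv _ v) =>
  (h.conj a).symm.trans (ha.trans h)

theorem last_mem_conjBraidStabilizer (g : Fin (n + 1) → G) (hprod : (List.ofFn g).prod = 1) :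
    g (Fin.last n) ∈ conjBraidStabilizer g := by
  obtain ⟨h, y, rfl⟩ : ∃ h y, g = Fin.snoc h y :=
    ⟨Fin.init g, g (Fin.last n), (Fin.snoc_init_self g).symm⟩
  rw [List.prod_ofFn_snoc] at hprod
  have hconj : (fun i => y * (Fin.snoc h y : Fin (n + 1) → G) i * y⁻¹) =
      Fin.snoc (fun i => y * h i * y⁻¹) y := by
    funext i
    refine Fin.lastCases ?_ (fun j => ?_) i <;> simp
  rw [Fin.snoc_last, mem_conjBraidStabilizer, hconj]
  exact (braidEquiv_cons_snoc y h).symm.trans (braidEquiv_snoc_cons_of_prod_mul_eq_one hprod).symm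

theorem apply_mem_conjBraidStabilizer (g : Fin r → G) (hprod : (List.ofFn g).prod = 1)
    (k : Fin r) : g k ∈ conjBraidStabilizer g := by
  cases r with
  | zero => exact k.elim0
  | succ n =>
    induction k using Fin.reverseInduction generalizing g with
    | last => exact last_mem_conjBraidStabilizer g hprod
    | cast k ih =>
      obtain ⟨h, y, rfl⟩ : ∃ h y, g = Fin.snoc h y :=
        ⟨Fin.init g, g (Fin.last n), (Fin.snoc_init_self g).symm⟩
      rw [List.prod_ofFn_snoc] at hprod
      have hrotated := ih (Fin.cons y h) (by rwa [List.prod_ofFn_cons, mul_eq_one_comm])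
      rw [Fin.cons_succ] at hrotated
      rw [Fin.snoc_castSucc]
      exact (braidEquiv_snoc_cons_of_prod_mul_eq_one hprod).symm.conjBraidStabilizer_le hrotated

end

/-- Inner automorphisms are realized by braids: if the tuple `g` has product `1`, then
componentwise conjugation by any element of the subgroup generated by its entries
preserves the braid orbit. -/
theorem inner_automorphisms_realized_by_braids {G : Type*} [Group G] {r : ℕ}
    (g : Fin r → G) (hprod : (List.ofFn g).prod = 1)
    (a : G) (ha : a ∈ Subgroup.closure (Set.range g)) :
    BraidEquiv (fun i => a * g i * a⁻¹) g := by
  have hentries : Set.range g ⊆ conjBraidStabilizer g := by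
    rintro _ ⟨k, rfl⟩
    exact apply_mem_conjBraidStabilizer g hprod k
  exact mem_conjBraidStabilizer.1 ((Subgroup.closure_le _).2 hentries ha)
end

section
/- Commutation relation in the ring of components: Let G be a group, a = (g₁,…,g_r) ∈ G^r and b = (g'₁,…,g'_s) ∈ G^s, and set π = g₁⋯g_r. Then the concatenated tuple (g₁,…,g_r, g'₁,…,g'_s) of length r+s is braid-equivalent to the tuple (π g'₁ π⁻¹, …, π g'_s π⁻¹, g₁,…,g_r). (This identity [a]·[b] = [b^π]·[a] on braid orbits is the reason the ring of components of Hurwitz spaces of covers of ℙ¹ is commutative.) -/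
/-!
Pushing an entry `x` leftwards through a block `p = (g₁,…,g_r)` by successive moves `Q_i`
conjugates it by `g_r`, then `g_{r-1}`, …, then `g₁`, so it arrives in front as `π x π⁻¹` while
`p` is left unchanged. Doing this for `g'₁, …, g'_s` in turn gives the claim. Only forward moves
are needed, so the argument runs on lists, where prefixes and concatenation involve no index
arithmetic, and is transported to tuples at the end.
-/

open Relation

namespace List

section Braid

variable {G : Type*} [Group G]

def BraidStep (l₁ l₂ : List G) : Prop :=
  ∃ p x y q, l₁ = p ++ x :: y :: q ∧ l₂ = p ++ (x * y * x⁻¹) :: x :: q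

theorem BraidStep.length_eq {l₁ l₂ : List G} (h : l₁.BraidStep l₂) :
    l₁.length = l₂.length := by
  obtain ⟨p, x, y, q, rfl, rfl⟩ := h
  simp

theorem BraidStep.append_left (p : List G) {l₁ l₂ : List G} (h : l₁.BraidStep l₂) :
    (p ++ l₁).BraidStep (p ++ l₂) := by
  obtain ⟨p', x, y, q, rfl, rfl⟩ := h
  exact ⟨p ++ p', x, y, q, by simp, by simp⟩

theorem reflTransGen_braidStep_append_left (p : List G) {l₁ l₂ : List G}
    (h : ReflTransGen BraidStep l₁ l₂) : ReflTransGen BraidStep (p ++ l₁) (p ++ l₂) :=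
  h.lift (p ++ ·) fun _ _ ↦ BraidStep.append_left p

theorem reflTransGen_braidStep_move_front (p : List G) (x : G) (q : List G) :
    ReflTransGen BraidStep (p ++ x :: q) ((p.prod * x * p.prod⁻¹) :: (p ++ q)) := by
  induction p with
  | nil => simp [ReflTransGen.refl]
  | cons g p ih =>
    have hstep : BraidStep (g :: (p.prod * x * p.prod⁻¹) :: (p ++ q))
        ((g :: p).prod * x * (g :: p).prod⁻¹ :: g :: (p ++ q)) :=
      ⟨[], g, p.prod * x * p.prod⁻¹, p ++ q, rfl, by simp [mul_assoc]⟩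
    exact (reflTransGen_braidStep_append_left [g] ih).tail hstep

theorem reflTransGen_braidStep_append_comm (p q : List G) :
    ReflTransGen BraidStep (p ++ q) (q.map (fun y ↦ p.prod * y * p.prod⁻¹) ++ p) := by
  induction q with
  | nil => simp [ReflTransGen.refl]
  | cons y q ih =>
    exact (reflTransGen_braidStep_move_front p y q).trans
      (reflTransGen_braidStep_append_left [_] ih)

end Braid

def toTuple {M : Type*} [One M] (n : ℕ) (l : List M) : Fin n → M :=
  fun i ↦ l.getD i 1

theorem toTuple_ofFn {M : Type*} [One M] {n : ℕ} (v : Fin n → M) : (ofFn v).toTuple n = v := by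
  ext i
  simp [toTuple]

section Transfer

variable {G : Type*} [Group G]

theorem BraidStep.toTuple {n : ℕ} {l₁ l₂ : List G} (h : l₁.BraidStep l₂) (hl : l₁.length = n) :
    _root_.BraidStep (l₁.toTuple n) (l₂.toTuple n) := by
  obtain ⟨p, x, y, q, rfl, rfl⟩ := h
  refine ⟨p.length, by simp at hl; omega, ?_, ?_, fun j hj₁ hj₂ ↦ ?_⟩
  · simp [List.toTuple]
  · simp [List.toTuple]
  · simp only [List.toTuple]
    rcases lt_or_gt_of_ne hj₁ with hlt | hgt
    · rw [getD_append _ _ _ _ hlt, getD_append _ _ _ _ hlt]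
    · obtain ⟨k, hk⟩ : ∃ k, j.val - p.length = k + 2 := ⟨j.val - p.length - 2, by omega⟩
      rw [getD_append_right _ _ _ _ hgt.le, getD_append_right _ _ _ _ hgt.le, hk]
      rfl

theorem reflTransGen_braidStep_toTuple {n : ℕ} {l₁ l₂ : List G}
    (h : ReflTransGen BraidStep l₁ l₂) (hl : l₁.length = n) :
    ReflTransGen _root_.BraidStep (l₁.toTuple n) (l₂.toTuple n) := by
  induction h using ReflTransGen.head_induction_on with
  | refl => rfl
  | head hstep _ ih => exact .head (hstep.toTuple hl) (ih (hstep.length_eq ▸ hl))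

end Transfer

end List

theorem braidEquiv_of_reflTransGen_ofFn {G : Type*} [Group G] {n : ℕ} {v w : Fin n → G}
    (h : ReflTransGen List.BraidStep (List.ofFn v) (List.ofFn w)) : BraidEquiv v w := by
  have h' := List.reflTransGen_braidStep_toTuple h List.length_ofFn
  rw [List.toTuple_ofFn, List.toTuple_ofFn] at h'
  exact EqvGen.reflTransGen_le_eqvGen _ _ _ h'

/-- Commutation relation in the ring of components: the concatenation `(a, b)` is
braid-equivalent to the concatenation `(b^π, a)`, where `π = a₁⋯a_r` is the product of
the entries of `a` and `b^π` is the componentwise conjugate of `b` by `π`. -/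
theorem concat_comm_ring_of_components {G : Type*} [Group G] {r s : ℕ}
    (a : Fin r → G) (b : Fin s → G) :
    BraidEquiv (Fin.append a b)
      (fun i : Fin (r + s) =>
        Fin.append (fun j : Fin s => (List.ofFn a).prod * b j * ((List.ofFn a).prod)⁻¹) a
          (Fin.cast (Nat.add_comm r s) i)) := by
  refine braidEquiv_of_reflTransGen_ofFn ?_
  rw [← List.ofFn_congr (Nat.add_comm s r), List.ofFn_fin_append, List.ofFn_fin_append]
  simpa only [List.map_ofFn, Function.comp_def] using
    List.reflTransGen_braidStep_append_comm (List.ofFn a) (List.ofFn b)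
end
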